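/- Let A be a Boolean algebra that is ω-free over some subset G ⊆ A. Then A contains no uncountable chain: every subset C ⊆ A that is totally ordered by the Boolean partial order ≤ is countable. -/

import Mathlib

/-!
Homomorphisms `A → Bool` are determined by their values on `G`, so by the prime ideal theorem `G`
generates `A`, and each `c` lies in the subalgebra generated by a finite support `F c ⊆ G`.
In an uncountable chain, the Δ-system lemma and pigeonholing give an uncountable subchain whose
supports pairwise meet in a common root `R` and whose members are forced by the same `ρ ⊆ R`.
Take `a₀ < a₁ < a₂ < a₃` in it, a homomorphism `w` with `w a₂ = true`, `w a₁ = false`, and let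
`ρ` be the trace of `w` on `R`. By ω-freeness the indicator of `F b ∩ w⁻¹(true)` on `G` extends
to a homomorphism, which agrees with `w` at `b` and with the indicator of `ρ` on the support of
the Δ-partner of `b`. Monotonicity along `a₀ ≤ a₁` shows that `ρ` does not force `a₀`, and
along `a₂ ≤ a₃` that it forces `a₃`.
-/

universe u v

/-- A function `f` (restricted to `X`) is ω-preserving: for every finite `H ⊆ X`
with `inf H = ⊥`, the infimum of the image is `⊥`. -/
def OmegaPreserving {α : Type u} {β : Type v} [BooleanAlgebra α] [BooleanAlgebra β]
    (X : Set α) (f : α → β) : Prop :=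
  ∀ H : Finset α, ↑H ⊆ X → H.inf id = ⊥ → H.inf f = ⊥

/-- `A` is ω-free over `X`: every ω-preserving function from `X` into any nontrivial
Boolean algebra extends to a unique Boolean algebra homomorphism. -/
def OmegaFree {α : Type u} [BooleanAlgebra α] (X : Set α) : Prop :=
  ∀ (β : Type v) [BooleanAlgebra β] [Nontrivial β] (f : α → β),
    OmegaPreserving X f → ∃! g : BoundedLatticeHom α β, ∀ x ∈ X, g x = f x

open Set

open Classical in
noncomputable def Order.Ideal.IsPrime.boolHom {α : Type*} [Lattice α] [BoundedOrder α]
    {J : Order.Ideal α} (hJ : J.IsPrime) : BoundedLatticeHom α Bool where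
  toFun x := decide (x ∉ J)
  map_sup' x y := by simp [Order.Ideal.sup_mem_iff]
  map_inf' x y := by
    have : x ⊓ y ∈ J ↔ x ∈ J ∨ y ∈ J :=
      ⟨hJ.mem_or_mem, fun h => h.elim (J.lower inf_le_left) (J.lower inf_le_right)⟩
    simp [this, not_or]
  map_top' := by simp [hJ.top_notMem]
  map_bot' := by simp [J.bot_mem]

theorem exists_boolHom_of_notMem_lowerClosure {α : Type*} [BooleanAlgebra α] {s : Set α} {a : α}
    (hne : s.Nonempty) (hs : SupClosed s) (ha : a ∉ lowerClosure s) :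
    ∃ u : BoundedLatticeHom α Bool, u a = true ∧ ∀ x ∈ s, u x = false := by
  let I : Order.Ideal α :=
    { toLowerSet := lowerClosure s
      nonempty' := hne.mono subset_lowerClosure
      directed' := by
        rintro x ⟨b, hb, hxb⟩ y ⟨c, hc, hyc⟩
        exact ⟨b ⊔ c, subset_lowerClosure (hs hb hc), le_sup_of_le_left hxb,
          le_sup_of_le_right hyc⟩ }
  obtain ⟨J, hJ, hIJ, haJ⟩ := DistribLattice.prime_ideal_of_disjoint_filter_ideal
    (F := Order.PFilter.principal a) (I := I) <| Set.disjoint_left.2 fun x hax hxI =>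
      ha ((lowerClosure s).lower hax hxI)
  refine ⟨hJ.boolHom, ?_, fun x hx => ?_⟩
  · simpa [Order.Ideal.IsPrime.boolHom] using Set.disjoint_left.1 haJ (le_refl a)
  · simpa [Order.Ideal.IsPrime.boolHom] using hIJ (subset_lowerClosure hx)

theorem exists_boolHom_of_not_le {α : Type*} [BooleanAlgebra α] {a b : α} (hab : ¬a ≤ b) :
    ∃ u : BoundedLatticeHom α Bool, u a = true ∧ u b = false := by
  obtain ⟨u, hua, hub⟩ := exists_boolHom_of_notMem_lowerClosure (singleton_nonempty b)
    supClosed_singleton (by simpa using hab)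
  exact ⟨u, hua, hub b rfl⟩

namespace BooleanSubalgebra

variable {α : Type*} [BooleanAlgebra α]

theorem mem_of_forall_boolHom_eqOn (L : BooleanSubalgebra α) {c : α}
    (hc : ∀ u₁ u₂ : BoundedLatticeHom α Bool, EqOn u₁ u₂ L → u₁ c = u₂ c) : c ∈ L := by
  by_contra hcL
  -- `w` kills the ideal `{d ∈ L | d ⊓ c ∈ L}` of `L`, which is proper as `c ∉ L`;
  -- this makes both `c` and `cᶜ` compatible with the trace of `w` on `L`
  obtain ⟨w, -, hw⟩ := exists_boolHom_of_notMem_lowerClosure (s := {d | d ∈ L ∧ d ⊓ c ∈ L})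
    (a := ⊤) ⟨⊥, by simp⟩
    (fun d hd e he => ⟨L.sup_mem hd.1 he.1, by rw [inf_sup_right]; exact L.sup_mem hd.2 he.2⟩)
    (by rintro ⟨d, hd, htop⟩; exact hcL (by simpa [top_le_iff.1 htop] using hd.2))
  have hw_true : ∀ d ∈ L, dᶜ ⊓ c ∈ L → w d = true := fun d hd hdc => by
    simpa using congrArg (!·) (hw dᶜ ⟨L.compl_mem hd, hdc⟩)
  have extend : ∀ a, (∀ d ∈ L, a ≤ d → dᶜ ⊓ c ∈ L) →
      ∃ u : BoundedLatticeHom α Bool, u a = true ∧ EqOn u w L := by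
    intro a ha
    obtain ⟨u, hua, hu⟩ := exists_boolHom_of_notMem_lowerClosure
      (s := {d | d ∈ L ∧ w d = false}) (a := a) ⟨⊥, by simp⟩
      (fun d hd e he => ⟨L.sup_mem hd.1 he.1, by simp [hd.2, he.2]⟩)
      (by rintro ⟨d, ⟨hdL, hwd⟩, had⟩; simp [hw_true d hdL (ha d hdL had)] at hwd)
    refine ⟨u, hua, fun d hd => ?_⟩
    cases hwd : w d
    · exact hu d ⟨hd, hwd⟩
    · simpa using congrArg (!·) (hu dᶜ ⟨L.compl_mem hd, by simp [hwd]⟩)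
  obtain ⟨u₁, hu₁c, hu₁⟩ := extend c fun d _ hcd => by
    simp [disjoint_iff.1 (disjoint_compl_left.mono_right hcd)]
  obtain ⟨u₂, hu₂c, hu₂⟩ := extend cᶜ fun d hd hcd => by
    simpa [inf_eq_left.2 (compl_le_iff_compl_le.1 hcd)] using hd
  have hu₂c' : u₂ c = false := by simpa using hu₂c
  simpa [hu₁c, hu₂c'] using hc u₁ u₂ (hu₁.trans hu₂.symm)

theorem exists_finset_of_mem_closure {s : Set α} {c : α} (hc : c ∈ closure s) :
    ∃ F : Finset α, ↑F ⊆ s ∧ c ∈ closure (F : Set α) := by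
  classical
  induction hc using closure_bot_sup_induction with
  | mem x hx => exact ⟨{x}, by simpa using hx, subset_closure (by simp)⟩
  | bot => exact ⟨∅, by simp, bot_mem⟩
  | sup x _ y _ hx hy =>
    obtain ⟨F₁, hF₁s, hxF₁⟩ := hx
    obtain ⟨F₂, hF₂s, hyF₂⟩ := hy
    refine ⟨F₁ ∪ F₂, by simpa using ⟨hF₁s, hF₂s⟩, sup_mem ?_ ?_⟩
    · exact closure_mono (by simp) hxF₁
    · exact closure_mono (by simp) hyF₂
  | compl x _ hx =>
    obtain ⟨F, hFs, hxF⟩ := hx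
    exact ⟨F, hFs, compl_mem hxF⟩

end BooleanSubalgebra

theorem BoundedLatticeHom.eqOn_closure {α β : Type*} [BooleanAlgebra α] [BooleanAlgebra β]
    {u₁ u₂ : BoundedLatticeHom α β} {s : Set α} (h : EqOn u₁ u₂ s) :
    EqOn u₁ u₂ (BooleanSubalgebra.closure s) := by
  intro c hc
  induction hc using BooleanSubalgebra.closure_bot_sup_induction with
  | mem x hx => exact h hx
  | bot => simp
  | sup x _ y _ hx hy => simp [hx, hy]
  | compl x _ hx => simp [hx]

instance {β : Type*} [HImp β] : HImp (ULift.{v} β) := ⟨fun x y => ⟨x.down ⇨ y.down⟩⟩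

instance {β : Type*} [BooleanAlgebra β] : BooleanAlgebra (ULift.{v} β) :=
  ULift.down_injective.booleanAlgebra _ .rfl .rfl (fun _ _ => rfl) (fun _ _ => rfl) rfl rfl
    (fun _ => rfl) (fun _ _ => rfl) (fun _ _ => rfl)

section OmegaPreserving

variable {α β γ : Type*} [BooleanAlgebra α] [BooleanAlgebra β] [BooleanAlgebra γ] {X : Set α}

theorem OmegaPreserving.comp {f : α → β} (hf : OmegaPreserving X f) (e : BoundedLatticeHom β γ) :
    OmegaPreserving X (e ∘ f) := fun H hHX hH => by
  rw [← map_finset_inf, hf H hHX hH, map_bot]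

theorem BoundedLatticeHom.omegaPreserving (u : BoundedLatticeHom α β) (X : Set α) :
    OmegaPreserving X u :=
  OmegaPreserving.comp (f := id) (fun _ _ hH => hH) u

theorem omegaPreserving_decide_mem [DecidableEq α] {P : Finset α} (hP : P.inf id ≠ ⊥)
    (X : Set α) : OmegaPreserving X fun x => decide (x ∈ P) := by
  intro H _ hH
  obtain ⟨x, hxH, hxP⟩ : ∃ x ∈ H, x ∉ P := by
    by_contra! hHP
    exact hP (le_bot_iff.1 (hH ▸ Finset.inf_mono hHP))
  exact le_bot_iff.1 ((Finset.inf_le hxH).trans_eq (decide_eq_false hxP))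

end OmegaPreserving

def Forces {α : Type*} [BooleanAlgebra α] [DecidableEq α] (F ρ : Finset α) (c : α) : Prop :=
  ∀ u : BoundedLatticeHom α Bool, (∀ x ∈ F, u x = decide (x ∈ ρ)) → u c = true

namespace OmegaFree

variable {α : Type u} [BooleanAlgebra α] {G : Set α}

theorem boolHom_ext (h : OmegaFree.{u, v} G) {u₁ u₂ : BoundedLatticeHom α Bool}
    (hG : EqOn u₁ u₂ G) : u₁ = u₂ := by
  let e : BoundedLatticeHom Bool (ULift.{v} Bool) := ↑(ULift.orderIso.{v, 0} (α := Bool)).symm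
  have : e.comp u₁ = e.comp u₂ := (h _ (e ∘ u₁) ((u₁.omegaPreserving G).comp e)).unique
    (fun _ _ => rfl) (fun x hx => by simp [hG hx])
  ext x
  simpa [e] using DFunLike.congr_fun this x

theorem exists_boolHom (h : OmegaFree.{u, v} G) {f : α → Bool} (hf : OmegaPreserving G f) :
    ∃ u : BoundedLatticeHom α Bool, EqOn u f G := by
  let e : BoundedLatticeHom Bool (ULift.{v} Bool) := ↑(ULift.orderIso.{v, 0} (α := Bool)).symm
  let d : BoundedLatticeHom (ULift.{v} Bool) Bool := ↑(ULift.orderIso.{v, 0} (α := Bool))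
  obtain ⟨g, hg, -⟩ := h _ (e ∘ f) (hf.comp e)
  exact ⟨d.comp g, fun x hx => by simp [d, e, hg x hx]⟩

theorem mem_closure (h : OmegaFree.{u, v} G) (c : α) : c ∈ BooleanSubalgebra.closure G :=
  BooleanSubalgebra.mem_of_forall_boolHom_eqOn _ fun _ _ hu =>
    DFunLike.congr_fun (h.boolHom_ext (hu.mono BooleanSubalgebra.subset_closure)) c

theorem exists_boolHom_eq_and (h : OmegaFree.{u, v} G) [DecidableEq α]
    (w : BoundedLatticeHom α Bool) (F : Finset α) :
    ∃ u : BoundedLatticeHom α Bool, ∀ x ∈ G, u x = (decide (x ∈ F) && w x) := by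
  have hP : (F.filter (w · = true)).inf id ≠ ⊥ := by
    intro hbot
    have : w ((F.filter (w · = true)).inf id) = true := by
      rw [map_finset_inf]
      exact (Finset.inf_eq_top_iff _ _).2 (by simp)
    simp [hbot] at this
  obtain ⟨u, hu⟩ := h.exists_boolHom (omegaPreserving_decide_mem hP G)
  exact ⟨u, fun x hx => by simp [hu hx]⟩

theorem exists_not_forces_and_forces (h : OmegaFree.{u, v} G) [DecidableEq α]
    {F : α → Finset α} (hFG : ∀ c, ↑(F c) ⊆ G)
    (hF : ∀ c, c ∈ BooleanSubalgebra.closure (F c : Set α)) {R : Finset α} {a₀ a₁ a₂ a₃ : α}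
    (h₀₁ : a₀ ≤ a₁) (h₁₂ : a₁ < a₂) (h₂₃ : a₂ ≤ a₃)
    (hR₀₁ : F a₀ ∩ F a₁ = R) (hR₂₃ : F a₂ ∩ F a₃ = R) :
    ∃ ρ ⊆ R, ¬Forces (F a₀) ρ a₀ ∧ Forces (F a₃) ρ a₃ := by
  obtain ⟨w, hw₂, hw₁⟩ := exists_boolHom_of_not_le h₁₂.not_ge
  have glue : ∀ a b, F a ∩ F b = R → ∃ u : BoundedLatticeHom α Bool,
      u b = w b ∧ ∀ x ∈ F a, u x = decide (x ∈ R.filter (w · = true)) := by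
    intro a b hab
    obtain ⟨u, hu⟩ := h.exists_boolHom_eq_and w (F b)
    refine ⟨u, BoundedLatticeHom.eqOn_closure (fun x hx => ?_) (hF b), fun x hx => ?_⟩
    · simp [hu x (hFG b hx), show x ∈ F b from hx]
    · rw [hu x (hFG a hx), ← hab]
      simp [hx]
  obtain ⟨u₁, hu₁, hu₁ρ⟩ := glue a₀ a₁ hR₀₁
  obtain ⟨u₂, hu₂, hu₂ρ⟩ := glue a₃ a₂ (by rw [Finset.inter_comm, hR₂₃])
  refine ⟨R.filter (w · = true), Finset.filter_subset _ _, fun hforces => ?_, fun u hu => ?_⟩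
  · simpa [hforces u₁ hu₁ρ, hu₁, hw₁, Bool.le_iff_imp] using OrderHomClass.mono u₁ h₀₁
  · have : u₂ a₃ = u a₃ := BoundedLatticeHom.eqOn_closure
      (fun x hx => (hu₂ρ x hx).trans (hu x hx).symm) (hF a₃)
    simpa [← this, hu₂, hw₂, Bool.le_iff_imp] using OrderHomClass.mono u₂ h₂₃

end OmegaFree

section Uncountable

variable {ι κ β : Type*}

theorem exists_not_countable_fiber [Countable κ] {s : Set ι} (hs : ¬s.Countable) (f : ι → κ) :
    ∃ y, ¬{x ∈ s | f x = y}.Countable := by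
  by_contra! H
  refine hs ((countable_iUnion H).mono fun x hx => ?_)
  exact mem_iUnion_of_mem (f x) ⟨hx, rfl⟩

theorem exists_not_countable_pairwiseDisjoint (F : ι → Finset β) {s : Set ι}
    (hs : ¬s.Countable) (hF : ∀ x, {c ∈ s | x ∈ F c}.Countable) :
    ∃ t ⊆ s, ¬t.Countable ∧ t.PairwiseDisjoint F := by
  obtain ⟨t, ht⟩ := zorn_subset {t | t ⊆ s ∧ t.PairwiseDisjoint F} fun c hc hchain =>
    ⟨⋃₀ c, show _ ∧ _ from ⟨sUnion_subset fun _ h => (hc h).1,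
      (hchain.pairwiseDisjoint_sUnion F).2 fun _ h => (hc h).2⟩, fun _ => subset_sUnion_of_mem⟩
  refine ⟨t, ht.prop.1, fun htc => hs ?_, ht.prop.2⟩
  -- by maximality, every member of `s` outside `t` meets some `F d` with `d ∈ t`
  have hcover : s ⊆ t ∪ ⋃ d ∈ t, ⋃ x ∈ F d, {c ∈ s | x ∈ F c} := by
    intro c hc
    by_contra hct
    simp only [mem_union, mem_iUnion, not_or, not_exists] at hct
    have hins : insert c t ∈ {t | t ⊆ s ∧ t.PairwiseDisjoint F} :=
      ⟨insert_subset hc ht.prop.1, ht.prop.2.insert fun d hd _ =>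
        Finset.disjoint_left.2 fun x hxc hxd => hct.2 d hd x hxd ⟨hc, hxc⟩⟩
    exact hct.1 (ht.le_of_ge hins (subset_insert c t) (mem_insert c t))
  exact (htc.union (htc.biUnion fun d _ =>
    (F d).countable_toSet.biUnion fun x _ => hF x)).mono hcover

theorem exists_not_countable_deltaSystem_of_card [DecidableEq β] (n : ℕ) (F : ι → Finset β)
    {s : Set ι} (hs : ¬s.Countable) (hcard : ∀ c ∈ s, (F c).card = n) :
    ∃ t ⊆ s, ¬t.Countable ∧ ∃ R, t.Pairwise fun c d => F c ∩ F d = R := by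
  induction n generalizing F s with
  | zero =>
    exact ⟨s, subset_rfl, hs, ∅, fun c hc _ _ _ => by simp [Finset.card_eq_zero.1 (hcard c hc)]⟩
  | succ n ih =>
    by_cases hx : ∃ x, ¬{c ∈ s | x ∈ F c}.Countable
    · obtain ⟨x, hx⟩ := hx
      obtain ⟨t, hts, ht, R, hR⟩ := ih (fun c => (F c).erase x) hx fun c hc => by
        rw [Finset.card_erase_of_mem hc.2, hcard c hc.1, Nat.add_sub_cancel]
      refine ⟨t, hts.trans (sep_subset _ _), ht, insert x R, fun c hc d hd hcd => ?_⟩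
      dsimp only
      rw [← hR hc hd hcd, Finset.erase_inter, Finset.inter_erase, Finset.erase_idem,
        Finset.insert_erase (Finset.mem_inter.2 ⟨(hts hc).2, (hts hd).2⟩)]
    · obtain ⟨t, hts, ht, hdisj⟩ :=
        exists_not_countable_pairwiseDisjoint F hs (not_exists_not.1 hx)
      exact ⟨t, hts, ht, ∅, fun c hc d hd hcd =>
        Finset.disjoint_iff_inter_eq_empty.1 (hdisj hc hd hcd)⟩

theorem exists_not_countable_deltaSystem [DecidableEq β] (F : ι → Finset β) {s : Set ι}
    (hs : ¬s.Countable) : ∃ t ⊆ s, ¬t.Countable ∧ ∃ R, t.Pairwise fun c d => F c ∩ F d = R := by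
  obtain ⟨n, hn⟩ := exists_not_countable_fiber hs fun c => (F c).card
  obtain ⟨t, hts, ht⟩ := exists_not_countable_deltaSystem_of_card n F hn fun c hc => hc.2
  exact ⟨t, hts.trans (sep_subset _ _), ht⟩

end Uncountable

theorem IsChain.exists_strictMono_fin {α : Type*} [PartialOrder α] {s : Set α}
    (hs : IsChain (· ≤ ·) s) (hinf : s.Infinite) (n : ℕ) :
    ∃ f : Fin n → α, StrictMono f ∧ ∀ i, f i ∈ s := by
  classical
  let := hs.linearOrder
  have : Infinite s := hinf.to_subtype
  obtain ⟨t, ht⟩ := Infinite.exists_subset_card_eq s n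
  exact ⟨fun i => t.orderEmbOfFin ht i, fun _ _ hij => (t.orderEmbOfFin ht).strictMono hij,
    fun i => (t.orderEmbOfFin ht i).2⟩

/-- An ω-free Boolean algebra has no uncountable chain: every subset totally ordered by
`≤` is countable. -/
theorem omegaFree_chain_countable {α : Type u} [BooleanAlgebra α]
    (G : Set α) (h : OmegaFree.{u, v} G)
    (C : Set α) (hC : IsChain (· ≤ ·) C) : C.Countable := by
  classical
  by_contra hC_unc
  choose F hFG hF using fun c => BooleanSubalgebra.exists_finset_of_mem_closure (h.mem_closure c)
  obtain ⟨D, hDC, hD, R, hR⟩ := exists_not_countable_deltaSystem F hC_unc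
  obtain ⟨τ, hτ⟩ := exists_not_countable_fiber hD fun c (ρ : R.powerset) => Forces (F c) ρ c
  obtain ⟨a, ha, haτ⟩ := (hC.mono ((sep_subset _ _).trans hDC)).exists_strictMono_fin
    (mt Set.Finite.countable hτ) 4
  have hRa : ∀ i j, i < j → F (a i) ∩ F (a j) = R := fun i j hij =>
    hR (haτ i).1 (haτ j).1 (ha hij).ne
  obtain ⟨ρ, hρR, hρ₀, hρ₃⟩ := h.exists_not_forces_and_forces hFG hF
    (ha (by decide : (0 : Fin 4) < 1)).le (ha (by decide : (1 : Fin 4) < 2))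
    (ha (by decide : (2 : Fin 4) < 3)).le (hRa 0 1 (by decide)) (hRa 2 3 (by decide))
  have hτ₀₃ := congrFun ((haτ 0).2.trans (haτ 3).2.symm) ⟨ρ, Finset.mem_powerset.2 hρR⟩
  exact hρ₀ ((iff_of_eq hτ₀₃).2 hρ₃)
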